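/- arXiv:1711.04720 — 3 statements merged into one kernel-verified Lean document; each statement's English description precedes it below -/
import Mathlib

section
/- For all real numbers x, y and real z with 0 < |z| < 1/8, there exists an absolute constant D > 0 (independent of x, y, z) such that 1 + z·cos(x+y) ≥ exp(−(z·sin x·sin y)/(1 + z·cos x) − D·|z|·y²) · (1 + z·cos x). -/
/-!
Write `c = 1 + z cos x`. Expanding `cos (x + y)` gives `1 + z cos (x + y) = c (1 - a - b)` with
`a = z sin x sin y / c` and `b = z cos x (1 - cos y) / c`, both of size `O(|z|)`, while `a²` and `b`
are `O(|z| y²)`. Since `exp (-a) ≤ 1 - a + a²` and `exp (-m) ≤ 1 / (1 + m)`, the claim reduces to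
`a² + b ≤ m (1 - a - b)` for `m = D |z| y²`, which holds already for `D = 2`.
-/

open Real

theorem exp_le_one_add_add_sq {s : ℝ} (hs : |s| ≤ 1) : exp s ≤ 1 + s + s ^ 2 := by
  linarith [(abs_le.mp (abs_exp_sub_one_sub_id_le hs)).2]

theorem exp_neg_sub_le_one_sub_sub {a b m : ℝ} (ha : |a| ≤ 1) (hm : 0 ≤ m)
    (h : a ^ 2 + b ≤ m * (1 - a - b)) : exp (-a - m) ≤ 1 - a - b := by
  have hexp_m : exp (-a - m) * (1 + m) ≤ exp (-a) :=
    calc exp (-a - m) * (1 + m) ≤ exp (-a - m) * exp m := by gcongr; linarith [add_one_le_exp m]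
      _ = exp (-a) := by rw [← exp_add]; ring_nf
  have hexp_a : exp (-a) ≤ 1 - a + a ^ 2 := by
    simpa [neg_sq, sub_eq_add_neg] using exp_le_one_add_add_sq (s := -a) (by rwa [abs_neg])
  refine le_of_mul_le_mul_right ?_ (by linarith : 0 < 1 + m)
  linarith

theorem one_add_mul_cos_add (x y z : ℝ) :
    1 + z * cos (x + y) = (1 + z * cos x) - z * sin x * sin y - z * cos x * (1 - cos y) := by
  rw [cos_add]; ring

theorem abs_mul_sin_mul_sin_le (x y z : ℝ) : |z * sin x * sin y| ≤ |z| * |sin y| := by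
  rw [abs_mul, abs_mul]
  gcongr
  exact mul_le_of_le_one_right (abs_nonneg z) (abs_sin_le_one x)

theorem abs_mul_cos_mul_one_sub_cos_le (x y z : ℝ) :
    |z * cos x * (1 - cos y)| ≤ |z| * (1 - cos y) := by
  have hcos : 0 ≤ 1 - cos y := sub_nonneg.mpr (cos_le_one y)
  rw [abs_mul, abs_mul, abs_of_nonneg hcos]
  exact mul_le_mul_of_nonneg_right (mul_le_of_le_one_right (abs_nonneg z) (abs_cos_le_one x)) hcos

section

variable {a b t y : ℝ} (ht0 : 0 ≤ t) (ht : t ≤ 1 / 7)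
  (ha : |a| ≤ t * |sin y|) (hb : |b| ≤ t * (1 - cos y))
include ht0 ht ha hb

theorem sq_add_le_mul_sq : a ^ 2 + b ≤ t * y ^ 2 := by
  have ha_sq : a ^ 2 ≤ t / 7 * y ^ 2 :=
    calc a ^ 2 = |a| ^ 2 := (sq_abs a).symm
      _ ≤ (t * |y|) ^ 2 := by gcongr; exact ha.trans (mul_le_mul_of_nonneg_left abs_sin_le_abs ht0)
      _ = t * t * y ^ 2 := by rw [mul_pow, sq_abs]; ring
      _ ≤ t / 7 * y ^ 2 := by gcongr; nlinarith
  have hb_le : b ≤ t * (y ^ 2 / 2) :=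
    (le_abs_self b).trans (hb.trans (by gcongr; linarith [one_sub_sq_div_two_le_cos (x := y)]))
  nlinarith [sq_nonneg y]

theorem four_div_seven_le_one_sub_sub : 4 / 7 ≤ 1 - a - b := by
  have ha1 : |a| ≤ t := ha.trans (mul_le_of_le_one_right ht0 (abs_sin_le_one y))
  have hb2 : |b| ≤ 2 * t := hb.trans (by nlinarith [neg_one_le_cos y])
  linarith [le_abs_self a, le_abs_self b]

end

theorem seven_div_eight_le_one_add_mul_cos {z : ℝ} (hz : |z| ≤ 1 / 8) (x : ℝ) :
    7 / 8 ≤ 1 + z * cos x := by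
  have := neg_abs_le (z * cos x)
  have := mul_le_of_le_one_right (abs_nonneg z) (abs_cos_le_one x)
  rw [← abs_mul] at this
  linarith

theorem abs_div_le_div_mul {p r k c : ℝ} (hc : 0 < c) (hp : |p| ≤ r * k) :
    |p / c| ≤ r / c * k := by
  rw [abs_div, abs_of_pos hc, div_mul_eq_mul_div]
  gcongr

theorem stmt0 :
    ∃ D : ℝ, 0 < D ∧ ∀ x y z : ℝ, 0 < |z| → |z| < 1/8 →
      Real.exp (-(z * Real.sin x * Real.sin y) / (1 + z * Real.cos x) - D * |z| * y ^ 2) *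
          (1 + z * Real.cos x) ≤ 1 + z * Real.cos (x + y) := by
  refine ⟨2, two_pos, fun x y z _ hz => ?_⟩
  set c := 1 + z * cos x
  have hc : 7 / 8 ≤ c := seven_div_eight_le_one_add_mul_cos hz.le x
  have hc0 : 0 < c := by linarith
  set a := z * sin x * sin y / c
  set b := z * cos x * (1 - cos y) / c
  have ht0 : 0 ≤ |z| / c := by positivity
  have ht : |z| / c ≤ 1 / 7 := by rw [div_le_iff₀ hc0]; linarith
  have ht' : |z| / c ≤ 8 / 7 * |z| := by rw [div_le_iff₀ hc0]; nlinarith [abs_nonneg z]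
  have ha := abs_div_le_div_mul hc0 (abs_mul_sin_mul_sin_le x y z)
  have hb := abs_div_le_div_mul hc0 (abs_mul_cos_mul_one_sub_cos_le x y z)
  have hab := sq_add_le_mul_sq ht0 ht ha hb
  have hab' := four_div_seven_le_one_sub_sub ht0 ht ha hb
  have ha1 : |a| ≤ 1 := by linarith [mul_le_of_le_one_right ht0 (abs_sin_le_one y)]
  have key : exp (-a - 2 * |z| * y ^ 2) ≤ 1 - a - b := by
    refine exp_neg_sub_le_one_sub_sub ha1 (by positivity) ?_
    nlinarith [mul_nonneg (abs_nonneg z) (sq_nonneg y)]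
  calc exp (-(z * sin x * sin y) / c - 2 * |z| * y ^ 2) * c ≤ (1 - a - b) * c := by
        rw [neg_div]; gcongr
    _ = 1 + z * cos (x + y) := by
        rw [one_add_mul_cos_add]; simp only [a, b]; field_simp; ring
end

section
/- Fix 3/2 < α < 2, and for integers m, j ≥ 0 let N_{m,j} := {k ≥ b : γ^m(k) = j} where γ(k) = ⌊α⁻¹(k−b)⌋ and b > 0 is a fixed constant. Then |N_{m,j}| ≤ α^m · 2α/(α−1). -/
lemma stmt11_key (α b : ℝ) (hα : 1 < α) (m : ℕ) :
    ∀ k₁ k₂ : ℤ,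
      (fun k : ℤ => ⌊((k : ℝ) - b) / α⌋)^[m] k₁ =
        (fun k : ℤ => ⌊((k : ℝ) - b) / α⌋)^[m] k₂ →
      (k₁ : ℝ) ≤ k₂ + α * (α ^ m - 1) / (α - 1) := by
  have hα1 : (0:ℝ) < α - 1 := by linarith
  have hα0 : (0:ℝ) < α := by linarith
  induction m with
  | zero =>
    intro k₁ k₂ h
    simp only [Function.iterate_zero, id] at h
    simp [h]
  | succ m ih =>
    intro k₁ k₂ h
    rw [Function.iterate_succ_apply, Function.iterate_succ_apply] at h
    have h1 := ih _ _ h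
    set F1 : ℝ := (⌊((k₁ : ℝ) - b) / α⌋ : ℝ) with hF1
    set F2 : ℝ := (⌊((k₂ : ℝ) - b) / α⌋ : ℝ) with hF2
    have hf1 : ((k₁ : ℝ) - b) / α - 1 < F1 := Int.sub_one_lt_floor _
    have hf2 : F2 ≤ ((k₂ : ℝ) - b) / α := Int.floor_le _
    have e1 : (k₁ : ℝ) < α * F1 + α + b := by
      have := (div_lt_iff₀ hα0).mp (by linarith : ((k₁ : ℝ) - b) / α < F1 + 1)
      linarith [this]
    have e2 : α * F2 ≤ (k₂ : ℝ) - b := by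
      have := (le_div_iff₀ hα0).mp hf2
      linarith [this]
    have e3 : α * F1 ≤ α * F2 + α * (α * (α ^ m - 1) / (α - 1)) := by
      have := mul_le_mul_of_nonneg_left h1 (le_of_lt hα0)
      linarith [this]
    have e4 : α * (α * (α ^ m - 1) / (α - 1)) + α = α * (α ^ (m + 1) - 1) / (α - 1) := by
      field_simp
      ring
    linarith
theorem stmt11 (α b : ℝ) (hα1 : 3/2 < α) (hα2 : α < 2) (hb : 0 < b)
    (m : ℕ) (j : ℤ) (hj : 0 ≤ j) :
    let γ : ℤ → ℤ := fun k => ⌊((k : ℝ) - b) / α⌋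
    let N : Set ℤ := {k : ℤ | b ≤ (k : ℝ) ∧ γ^[m] k = j}
    N.Finite ∧ (N.ncard : ℝ) ≤ α ^ m * (2 * α / (α - 1)) := by
  intro γ N
  have hαgt : (1:ℝ) < α := by linarith
  have hαm1 : (0:ℝ) < α - 1 := by linarith
  have hα0 : (0:ℝ) < α := by linarith
  set D : ℝ := α * (α ^ m - 1) / (α - 1) with hD
  have hD0 : 0 ≤ D := by
    apply div_nonneg _ (le_of_lt hαm1)
    have : (1:ℝ) ≤ α ^ m := one_le_pow₀ (le_of_lt hαgt)
    nlinarith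
  have key : ∀ k₁ k₂ : ℤ, k₁ ∈ N → k₂ ∈ N → (k₁ : ℝ) ≤ k₂ + D := by
    intro k₁ k₂ h₁ h₂
    exact stmt11_key α b hαgt m k₁ k₂ (h₁.2.trans h₂.2.symm)
  have keyZ : ∀ k₁ k₂ : ℤ, k₁ ∈ N → k₂ ∈ N → k₁ ≤ k₂ + ⌊D⌋ := by
    intro k₁ k₂ h₁ h₂
    have := key k₁ k₂ h₁ h₂
    have : (k₁ - k₂ : ℤ) ≤ ⌊D⌋ := by
      apply Int.le_floor.mpr
      push_cast
      linarith
    omega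
  -- final numeric bound: D + 1 ≤ α^m * (2α/(α-1))
  have hfinal : D + 1 ≤ α ^ m * (2 * α / (α - 1)) := by
    rw [show α ^ m * (2 * α / (α - 1)) = 2 * α ^ (m + 1) / (α - 1) by
      field_simp; ring]
    rw [hD, div_add' _ _ _ (ne_of_gt hαm1), div_le_div_iff₀ hαm1 hαm1]
    rw [pow_succ]
    nlinarith [pow_pos hα0 m, mul_pos (mul_pos hα0 (pow_pos hα0 m)) hαm1]
  rcases Set.eq_empty_or_nonempty N with hN | hN
  · constructor
    · simp [hN]
    · simp [hN]
      positivity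
  · obtain ⟨k₀, hk₀⟩ := hN
    have hsub : N ⊆ Set.Icc (k₀ - ⌊D⌋) (k₀ + ⌊D⌋) := by
      intro k hk
      constructor
      · have := keyZ k₀ k hk₀ hk; omega
      · exact keyZ k k₀ hk hk₀
    have hfin : N.Finite := (Set.finite_Icc _ _).subset hsub
    refine ⟨hfin, ?_⟩
    -- take the minimum element
    have hne' : hfin.toFinset.Nonempty := by
      rw [Set.Finite.toFinset_nonempty]; exact ⟨k₀, hk₀⟩
    set km := hfin.toFinset.min' hne' with hkm
    have hkmN : km ∈ N := by
      have := hfin.toFinset.min'_mem hne'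
      rwa [Set.Finite.mem_toFinset] at this
    have hsub2 : N ⊆ Set.Icc km (km + ⌊D⌋) := by
      intro k hk
      constructor
      · exact hfin.toFinset.min'_le k (by rwa [Set.Finite.mem_toFinset])
      · exact keyZ k km hk hkmN
    have hcard : N.ncard ≤ (Set.Icc km (km + ⌊D⌋)).ncard :=
      Set.ncard_le_ncard hsub2 (Set.finite_Icc _ _)
    have hIcc : (Set.Icc km (km + ⌊D⌋)).ncard = (⌊D⌋ + 1).toNat := by
      rw [← Finset.coe_Icc, Set.ncard_coe_finset, Int.card_Icc]
      congr 1
      omega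
    have hDfloor0 : 0 ≤ ⌊D⌋ := Int.floor_nonneg.mpr hD0
    have h1 : (N.ncard : ℝ) ≤ (⌊D⌋ : ℝ) + 1 := by
      rw [hIcc] at hcard
      have hz : (N.ncard : ℤ) ≤ ⌊D⌋ + 1 := by omega
      exact_mod_cast hz
    have h2 : (⌊D⌋ : ℝ) ≤ D := Int.floor_le _
    linarith
end

section
/- Define T: ℝ^{Λ_L^free} → ℝ^{Λ_{2L}^per} by T[f](a,b) := f(min(a, 2L−1−a), min(b, 2L−1−b)), i.e. reflection of f across the principal axes, where Λ_L^free is the L×L grid with free boundary and Λ_{2L}^per is the 2L×2L torus. Then Δ^per ∘ T = T ∘ Δ^free, where Δ^free and Δ^per denote the graph Laplacians (Δf)(j) = Σ_{ℓ∼j}(f(ℓ)−f(j)) on the respective graphs. -/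
lemma sum1d (L : ℕ) (i : Fin L) (F : Fin L → ℝ) :
    ∑ q ∈ Finset.univ.filter (fun q : Fin L =>
        (((q : ℕ) : ℤ) - ((i : ℕ) : ℤ)).natAbs = 1), F q
    = (if h : i.val + 1 < L then F ⟨i.val + 1, h⟩ else 0)
      + (if h : 0 < i.val then F ⟨i.val - 1, by omega⟩ else 0) := by
  by_cases h1 : i.val + 1 < L <;> by_cases h2 : 0 < i.val
  · rw [dif_pos h1, dif_pos h2]
    rw [show Finset.univ.filter (fun q : Fin L =>
        (((q : ℕ) : ℤ) - ((i : ℕ) : ℤ)).natAbs = 1)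
        = {⟨i.val + 1, h1⟩, ⟨i.val - 1, by omega⟩} from by
      ext q; simp [Fin.ext_iff]; omega]
    rw [Finset.sum_pair (by simp [Fin.ext_iff]; omega)]
  · rw [dif_pos h1, dif_neg h2]
    rw [show Finset.univ.filter (fun q : Fin L =>
        (((q : ℕ) : ℤ) - ((i : ℕ) : ℤ)).natAbs = 1)
        = {⟨i.val + 1, h1⟩} from by ext q; simp [Fin.ext_iff]; omega]
    rw [Finset.sum_singleton]; ring
  · rw [dif_neg h1, dif_pos h2]
    rw [show Finset.univ.filter (fun q : Fin L =>
        (((q : ℕ) : ℤ) - ((i : ℕ) : ℤ)).natAbs = 1)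
        = {⟨i.val - 1, by omega⟩} from by ext q; simp [Fin.ext_iff]; omega]
    rw [Finset.sum_singleton]; ring
  · rw [dif_neg h1, dif_neg h2]
    rw [show Finset.univ.filter (fun q : Fin L =>
        (((q : ℕ) : ℤ) - ((i : ℕ) : ℤ)).natAbs = 1)
        = ∅ from by ext q; simp [Fin.ext_iff]; omega]
    rw [Finset.sum_empty]; ring

lemma fin1d (L : ℕ) (g : Fin L → ℝ) (i x y : Fin L)
    (hx : (x : ℕ) = if i.val + 1 < L then i.val + 1 else i.val)
    (hy : (y : ℕ) = if 0 < i.val then i.val - 1 else i.val) :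
    g x + g y - 2 * g i
    = (if h : i.val + 1 < L then (g ⟨i.val + 1, h⟩ - g i) else 0)
      + (if h : 0 < i.val then (g ⟨i.val - 1, by omega⟩ - g i) else 0) := by
  have hx' : x = if h : i.val + 1 < L then (⟨i.val + 1, h⟩ : Fin L) else i := by
    split_ifs with h <;> exact Fin.ext (by simp [hx, h])
  have hy' : y = if h : 0 < i.val then (⟨i.val - 1, by omega⟩ : Fin L) else i := by
    split_ifs with h <;> exact Fin.ext (by simp [hy, h])
  rw [hx', hy']
  split_ifs <;> ring

lemma refl1d (L : ℕ) (hL : 0 < L) [NeZero (2*L)] (a : ZMod (2*L)) (g : Fin L → ℝ)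
    (i ip im : Fin L) (hi : (i : ℕ) = min a.val (2*L - 1 - a.val))
    (hip : (ip : ℕ) = min (a+1).val (2*L - 1 - (a+1).val))
    (him : (im : ℕ) = min (a-1).val (2*L - 1 - (a-1).val)) :
    g ip + g im - 2 * g i
    = ∑ q ∈ Finset.univ.filter (fun q : Fin L =>
        (((q : ℕ) : ℤ) - ((i : ℕ) : ℤ)).natAbs = 1), (g q - g i) := by
  rw [sum1d]
  have hF : Fact (1 < 2*L) := ⟨by omega⟩
  have hA : a.val < 2*L := ZMod.val_lt a
  have hu : (a + 1).val = (a.val + 1) % (2*L) := by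
    rw [ZMod.val_add, ZMod.val_one]
  have hv : (a - 1).val = (a.val + (2*L - 1)) % (2*L) := by
    have h1 : (a - 1) = a + ((2*L - 1 : ℕ) : ZMod (2*L)) := by
      have h2 : ((2*L : ℕ) : ZMod (2*L)) = 0 := ZMod.natCast_self _
      push_cast [Nat.cast_sub (by omega : 1 ≤ 2*L)] at h2 ⊢
      linear_combination -h2
    rw [h1, ZMod.val_add, ZMod.val_natCast,
      Nat.mod_eq_of_lt (show 2*L - 1 < 2*L by omega)]
  have hu' : (a.val + 1 < 2*L ∧ (a+1).val = a.val + 1)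
      ∨ (a.val + 1 = 2*L ∧ (a+1).val = 0) := by
    rcases Nat.lt_or_ge (a.val + 1) (2*L) with h | h
    · exact Or.inl ⟨h, by rw [hu, Nat.mod_eq_of_lt h]⟩
    · refine Or.inr ⟨by omega, ?_⟩
      rw [hu, show a.val + 1 = 2*L by omega, Nat.mod_self]
  have hv' : (0 < a.val ∧ (a-1).val = a.val - 1)
      ∨ (a.val = 0 ∧ (a-1).val = 2*L - 1) := by
    rcases Nat.eq_zero_or_pos a.val with h | h
    · refine Or.inr ⟨h, ?_⟩
      rw [hv, h, Nat.zero_add, Nat.mod_eq_of_lt (by omega)]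
    · refine Or.inl ⟨h, ?_⟩
      rw [hv, show a.val + (2*L - 1) = (a.val - 1) + 2*L by omega,
        Nat.add_mod_right, Nat.mod_eq_of_lt (by omega)]
  rcases Nat.lt_or_ge a.val L with hc | hc
  · exact fin1d L g i ip im (by split_ifs with h <;> omega)
      (by split_ifs with h <;> omega)
  · have := fin1d L g i im ip (by split_ifs with h <;> omega)
      (by split_ifs with h <;> omega)
    linarith

lemma split2d (L : ℕ) (p : Fin L × Fin L) (F : Fin L × Fin L → ℝ) :
    ∑ q ∈ Finset.univ.filter (fun q : Fin L × Fin L =>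
        (((q.1 : ℕ) : ℤ) - ((p.1 : ℕ) : ℤ)).natAbs +
          (((q.2 : ℕ) : ℤ) - ((p.2 : ℕ) : ℤ)).natAbs = 1), F q
    = (∑ x ∈ Finset.univ.filter (fun x : Fin L =>
        (((x : ℕ) : ℤ) - ((p.1 : ℕ) : ℤ)).natAbs = 1), F (x, p.2))
      + ∑ y ∈ Finset.univ.filter (fun y : Fin L =>
        (((y : ℕ) : ℤ) - ((p.2 : ℕ) : ℤ)).natAbs = 1), F (p.1, y) := by
  rw [Finset.sum_filter, Finset.sum_filter, Finset.sum_filter, Fintype.sum_prod_type]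
  have key : ∀ x y : Fin L,
      (if (((x : ℕ) : ℤ) - ((p.1 : ℕ) : ℤ)).natAbs +
          (((y : ℕ) : ℤ) - ((p.2 : ℕ) : ℤ)).natAbs = 1 then F (x, y) else 0)
      = (if y = p.2 then (if (((x : ℕ) : ℤ) - ((p.1 : ℕ) : ℤ)).natAbs = 1
            then F (x, y) else 0) else 0)
        + (if x = p.1 then (if (((y : ℕ) : ℤ) - ((p.2 : ℕ) : ℤ)).natAbs = 1
            then F (x, y) else 0) else 0) := by
    intro x y
    by_cases hx : x = p.1 <;> by_cases hy : y = p.2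
    · subst hx; subst hy; simp
    · subst hx
      rw [if_neg hy, if_pos rfl, zero_add]
      exact if_congr (by simp) rfl rfl
    · subst hy
      rw [if_pos rfl, if_neg hx, add_zero]
      exact if_congr (by simp) rfl rfl
    · rw [if_neg hy, if_neg hx, add_zero,
        if_neg (by
          have h1 : (x : ℕ) ≠ (p.1 : ℕ) := fun h => hx (Fin.ext h)
          have h2 : (y : ℕ) ≠ (p.2 : ℕ) := fun h => hy (Fin.ext h)
          omega)]
  have e1 : ∀ x : Fin L, (∑ y : Fin L, if y = p.2 then
      (if (((x : ℕ) : ℤ) - ((p.1 : ℕ) : ℤ)).natAbs = 1 then F (x, y) else 0) else 0)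
      = (if (((x : ℕ) : ℤ) - ((p.1 : ℕ) : ℤ)).natAbs = 1 then F (x, p.2) else 0) := by
    intro x
    rw [Finset.sum_ite_eq' Finset.univ p.2
      (fun y => if (((x : ℕ) : ℤ) - ((p.1 : ℕ) : ℤ)).natAbs = 1 then F (x, y) else 0),
      if_pos (Finset.mem_univ _)]
  simp only [key, Finset.sum_add_distrib, e1]
  congr 1
  rw [Finset.sum_comm]
  refine Finset.sum_congr rfl fun y _ => ?_
  rw [Finset.sum_ite_eq' Finset.univ p.1
    (fun x => if (((y : ℕ) : ℤ) - ((p.2 : ℕ) : ℤ)).natAbs = 1 then F (x, y) else 0),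
    if_pos (Finset.mem_univ _)]

lemma main2d (L : ℕ) (hL : 0 < L) [NeZero (2*L)] (a b : ZMod (2*L))
    (f : (Fin L × Fin L) → ℝ) (i j ip im jp jm : Fin L)
    (hi : (i : ℕ) = min a.val (2*L - 1 - a.val))
    (hip : (ip : ℕ) = min (a+1).val (2*L - 1 - (a+1).val))
    (him : (im : ℕ) = min (a-1).val (2*L - 1 - (a-1).val))
    (hj : (j : ℕ) = min b.val (2*L - 1 - b.val))
    (hjp : (jp : ℕ) = min (b+1).val (2*L - 1 - (b+1).val))
    (hjm : (jm : ℕ) = min (b-1).val (2*L - 1 - (b-1).val)) :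
    f (ip, j) + f (im, j) + f (i, jp) + f (i, jm) - 4 * f (i, j)
    = ∑ q ∈ Finset.univ.filter (fun q : Fin L × Fin L =>
        (((q.1 : ℕ) : ℤ) - ((i : ℕ) : ℤ)).natAbs +
          (((q.2 : ℕ) : ℤ) - ((j : ℕ) : ℤ)).natAbs = 1), (f q - f (i, j)) := by
  rw [split2d L (i, j) (fun q => f q - f (i, j))]
  rw [← refl1d L hL a (fun x => f (x, j)) i ip im hi hip him,
      ← refl1d L hL b (fun y => f (i, y)) j jp jm hj hjp hjm]
  ring

set_option maxHeartbeats 1000000 in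
theorem stmt15 (L : ℕ) (hL : 0 < L) [NeZero (2 * L)]
    (Δfree : ((Fin L × Fin L) → ℝ) → ((Fin L × Fin L) → ℝ))
    (hfree : ∀ (f : (Fin L × Fin L) → ℝ) (p : Fin L × Fin L), Δfree f p =
      ∑ q ∈ Finset.univ.filter (fun q : Fin L × Fin L =>
        (((q.1 : ℕ) : ℤ) - ((p.1 : ℕ) : ℤ)).natAbs +
          (((q.2 : ℕ) : ℤ) - ((p.2 : ℕ) : ℤ)).natAbs = 1), (f q - f p))
    (Δper : ((ZMod (2*L) × ZMod (2*L)) → ℝ) → ((ZMod (2*L) × ZMod (2*L)) → ℝ))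
    (hper : ∀ g p, Δper g p =
      g (p.1 + 1, p.2) + g (p.1 - 1, p.2) + g (p.1, p.2 + 1) + g (p.1, p.2 - 1) - 4 * g p)
    (T : ((Fin L × Fin L) → ℝ) → ((ZMod (2*L) × ZMod (2*L)) → ℝ))
    (hT : ∀ (f : (Fin L × Fin L) → ℝ) (p : ZMod (2*L) × ZMod (2*L)), T f p =
      f (⟨min p.1.val (2*L - 1 - p.1.val), by
            have h1 := ZMod.val_lt p.1; omega⟩,
         ⟨min p.2.val (2*L - 1 - p.2.val), by
            have h2 := ZMod.val_lt p.2; omega⟩))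
    (f : (Fin L × Fin L) → ℝ) :
    Δper (T f) = T (Δfree f) := by
  funext p
  obtain ⟨a, b⟩ := p
  rw [hper]
  dsimp only
  rw [hT f (a + 1, b), hT f (a - 1, b), hT f (a, b + 1), hT f (a, b - 1), hT f (a, b),
    hT (Δfree f) (a, b), hfree]
  dsimp only
  exact main2d L hL a b f
    ⟨min a.val (2*L - 1 - a.val), by have := ZMod.val_lt a; omega⟩
    ⟨min b.val (2*L - 1 - b.val), by have := ZMod.val_lt b; omega⟩
    ⟨min (a+1).val (2*L - 1 - (a+1).val), by have := ZMod.val_lt (a+1); omega⟩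
    ⟨min (a-1).val (2*L - 1 - (a-1).val), by have := ZMod.val_lt (a-1); omega⟩
    ⟨min (b+1).val (2*L - 1 - (b+1).val), by have := ZMod.val_lt (b+1); omega⟩
    ⟨min (b-1).val (2*L - 1 - (b-1).val), by have := ZMod.val_lt (b-1); omega⟩
    rfl rfl rfl rfl rfl rfl
end
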